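/- arXiv:math/0512235 — 5 statements merged into one kernel-verified Lean document; each statement's English description precedes it below -/
import Mathlib

section
/- Let R be a commutative ring, P a finite subset of R, and P_0, ..., P_r subsets of P such that (i) the union of the P_i equals P, (ii) P_0 has exactly one element, and (iii) for any two distinct elements p, p' of P_i with 0 < i ≤ r, there exists i' < i and an element of P_{i'} dividing p·p'. For each p choose an integer e(p) ≥ 1 and set q_i = Σ_{p ∈ P_i} p^{e(p)}. Then the radical of the ideal generated by P equals the radical of the ideal generated by q_0, ..., q_r. -/
/-!
Every `q_i` lies in the radical `J` of `(q_0, …, q_r)`, so it suffices to show that each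
`p ∈ P_i` lies in `J`; we argue by induction on `i`. Multiplying `q_i` by `p` gives
`p ^ (e p + 1)` plus cross terms `p * p' ^ e p'` with `p' ≠ p` in `P_i`. Each cross term is a
multiple of `p * p'`, hence of an element of an earlier `P_{i'}`, which lies in `J` by induction.
So `p ^ (e p + 1) ∈ J`, and `p ∈ J` because `J` is radical. The layer `P_0` has no cross terms.
-/

section

variable {R : Type*} [CommRing R]

theorem Ideal.pow_succ_mem_of_sum_pow_mem {I : Ideal R} {s : Finset R} (e : R → ℕ) {p : R}
    (hp : p ∈ s) (hsum : ∑ q ∈ s, q ^ e q ∈ I) (hcross : ∀ q ∈ s, q ≠ p → p * q ^ e q ∈ I) :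
    p ^ (e p + 1) ∈ I := by
  classical
  have hsplit : p * ∑ q ∈ s, q ^ e q = p ^ (e p + 1) + ∑ q ∈ s.erase p, p * q ^ e q := by
    rw [Finset.mul_sum, ← Finset.add_sum_erase _ _ hp, pow_succ']
  have hcross_sum : ∑ q ∈ s.erase p, p * q ^ e q ∈ I :=
    I.sum_mem fun q hq => hcross q (Finset.mem_of_mem_erase hq) (Finset.ne_of_mem_erase hq)
  have := I.sub_mem (I.mul_mem_left p hsum) hcross_sum
  rwa [hsplit, add_sub_cancel_right] at this

theorem Ideal.IsRadical.mem_of_sum_pow_mem_of_dvd_mul {ι : Type*} [LT ι] [WellFoundedLT ι]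
    {J : Ideal R} (hJ : J.IsRadical) (Ps : ι → Finset R) (e : R → ℕ)
    (he : ∀ i, ∀ p ∈ Ps i, e p ≠ 0)
    (hdvd : ∀ i, ∀ p ∈ Ps i, ∀ p' ∈ Ps i, p ≠ p' → ∃ i' < i, ∃ q ∈ Ps i', q ∣ p * p')
    (hsum : ∀ i, ∑ p ∈ Ps i, p ^ e p ∈ J) (i : ι) : ∀ p ∈ Ps i, p ∈ J := by
  induction i using WellFoundedLT.induction with
  | _ i ih =>
  intro p hp
  refine hJ ⟨e p + 1, J.pow_succ_mem_of_sum_pow_mem e hp (hsum i) fun p' hp' hne => ?_⟩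
  obtain ⟨i', hi', q, hq, hqd⟩ := hdvd i p hp p' hp' hne.symm
  exact J.mem_of_dvd (hqd.trans (mul_dvd_mul_left p (dvd_pow_self p' (he i p' hp'))))
    (ih i' hi' q hq)

end

theorem schmitt_vogel_general {R : Type*} [CommRing R] [DecidableEq R] (r : ℕ) (P : Finset R)
    (Ps : Fin (r + 1) → Finset R)
    (h1 : Finset.univ.biUnion Ps = P)
    (h2 : (Ps 0).card = 1)
    (h3 : ∀ i : Fin (r + 1), 0 < i → ∀ p ∈ Ps i, ∀ p' ∈ Ps i, p ≠ p' →
      ∃ i' : Fin (r + 1), i' < i ∧ ∃ q ∈ Ps i', q ∣ p * p')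
    (e : R → ℕ) (he : ∀ p ∈ P, 1 ≤ e p) :
    Ideal.radical (Ideal.span (P : Set R)) =
      Ideal.radical (Ideal.span (Set.range fun i : Fin (r + 1) => ∑ p ∈ Ps i, p ^ e p)) := by
  set K := Ideal.span (Set.range fun i : Fin (r + 1) => ∑ p ∈ Ps i, p ^ e p)
  have hsub : ∀ i, Ps i ⊆ P := fun i => h1 ▸ Finset.subset_biUnion_of_mem Ps (Finset.mem_univ i)
  have hdvd : ∀ i, ∀ p ∈ Ps i, ∀ p' ∈ Ps i, p ≠ p' → ∃ i' < i, ∃ q ∈ Ps i', q ∣ p * p' := by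
    intro i p hp p' hp' hne
    by_cases hi : i = 0
    · subst hi
      exact absurd (Finset.card_le_one.mp h2.le p hp p' hp') hne
    · exact h3 i (Fin.pos_iff_ne_zero.mpr hi) p hp p' hp' hne
  have hPK : ∀ p ∈ P, p ∈ K.radical := by
    intro p hp
    obtain ⟨i, -, hpi⟩ := Finset.mem_biUnion.mp (h1 ▸ hp)
    exact K.radical_isRadical.mem_of_sum_pow_mem_of_dvd_mul Ps e
      (fun i p hp => Nat.one_le_iff_ne_zero.mp (he p (hsub i hp))) hdvd
      (fun i => Ideal.le_radical (Ideal.subset_span ⟨i, rfl⟩)) i p hpi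
  refine le_antisymm (Ideal.radical_le_radical_iff.mpr (Ideal.span_le.mpr hPK))
    (Ideal.radical_mono (Ideal.span_le.mpr ?_))
  rintro _ ⟨i, rfl⟩
  exact Ideal.sum_mem _ fun p hp =>
    Ideal.pow_mem_of_mem _ (Ideal.subset_span (hsub i hp)) _ (he p (hsub i hp))

/-- Schmitt–Vogel lemma. -/
theorem schmitt_vogel {R : Type*} [CommRing R] [DecidableEq R] (r : ℕ) (P : Finset R)
    (Ps : Fin (r + 1) → Finset R)
    (hsub : ∀ i, Ps i ⊆ P)
    (h1 : Finset.univ.biUnion Ps = P)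
    (h2 : (Ps 0).card = 1)
    (h3 : ∀ i : Fin (r + 1), 0 < i → ∀ p ∈ Ps i, ∀ p' ∈ Ps i, p ≠ p' →
      ∃ i' : Fin (r + 1), i' < i ∧ ∃ q ∈ Ps i', q ∣ p * p')
    (e : R → ℕ) (he : ∀ p ∈ P, 1 ≤ e p) :
    Ideal.radical (Ideal.span (P : Set R)) =
      Ideal.radical (Ideal.span (Set.range fun i : Fin (r + 1) => ∑ p ∈ Ps i, p ^ e p)) :=
  schmitt_vogel_general r P Ps h1 h2 h3 e he
end

section
/- Let M be a finite set, k ≥ 1, and let L_k denote the set of products ∏_{f ∈ S} f over k-element subsets S of M (elements of a commutative monoid indexed by M). If S and S' are two distinct k-element subsets of M, then the product (∏_{f ∈ S} f)·(∏_{f ∈ S'} f) is divisible by ∏_{f ∈ T} f for some (k+1)-element subset T of M. -/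
open Finset

namespace Finset

variable {ι α : Type*}

theorem exists_mem_notMem_of_card_le_of_ne {s t : Finset ι} (hcard : #s ≤ #t) (hne : s ≠ t) :
    ∃ x ∈ t, x ∉ s := by
  by_contra! hts
  exact hne (eq_of_subset_of_card_le hts hcard).symm

theorem prod_insert_dvd_prod_mul_prod [CommMonoid α] [DecidableEq ι] (g : ι → α)
    {s t : Finset ι} {x : ι} (hxt : x ∈ t) (hxs : x ∉ s) :
    (∏ f ∈ insert x s, g f) ∣ (∏ f ∈ s, g f) * ∏ f ∈ t, g f := by
  rw [prod_insert hxs, mul_comm]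
  exact mul_dvd_mul_left _ (dvd_prod_of_mem g hxt)

end Finset

theorem product_of_distinct_subsets_divisible_general {ι α : Type*} [CommMonoid α] [DecidableEq ι]
    (M : Finset ι) (g : ι → α) (k : ℕ)
    (S S' : Finset ι) (hS : S ⊆ M) (hS' : S' ⊆ M)
    (hcS : S.card = k) (hcS' : S'.card = k) (hne : S ≠ S') :
    ∃ T ⊆ M, T.card = k + 1 ∧ (∏ f ∈ T, g f) ∣ (∏ f ∈ S, g f) * ∏ f ∈ S', g f := by
  obtain ⟨x, hxS', hxS⟩ := exists_mem_notMem_of_card_le_of_ne (hcS.trans hcS'.symm).le hne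
  exact ⟨insert x S, insert_subset (hS' hxS') hS, by rw [card_insert_of_notMem hxS, hcS],
    prod_insert_dvd_prod_mul_prod g hxS' hxS⟩

theorem product_of_distinct_subsets_divisible {ι α : Type*} [CommMonoid α] [DecidableEq ι]
    (M : Finset ι) (g : ι → α) (k : ℕ) (hk : 1 ≤ k)
    (S S' : Finset ι) (hS : S ⊆ M) (hS' : S' ⊆ M)
    (hcS : S.card = k) (hcS' : S'.card = k) (hne : S ≠ S') :
    ∃ T ⊆ M, T.card = k + 1 ∧ (∏ f ∈ T, g f) ∣ (∏ f ∈ S, g f) * ∏ f ∈ S', g f :=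
  product_of_distinct_subsets_divisible_general M g k S S' hS hS' hcS hcS' hne
end

section
/- Let I be a squarefree monomial ideal in R = K[x_1,...,x_n] with minimal monomial generating set M of cardinality μ, and let ν be defined as follows: for each minimal prime I_j of I, let ν_j = max over variables x_i ∈ I_j of the number of elements of M divisible by x_i, and let ν = min_j ν_j. Then the arithmetical rank of I satisfies ara I ≤ μ − ν + 1. -/
open MvPolynomial

/-- The arithmetical rank of an ideal: the least number of elements generating it up to
radical. -/
noncomputable def ara {R : Type*} [CommRing R] (J : Ideal R) : ℕ :=
  sInf {s : ℕ | ∃ f : Fin s → R,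
    Ideal.radical (Ideal.span (Set.range f)) = Ideal.radical J}

/-- If a product over a finset lies in a prime ideal, some factor does. -/
lemma prime_prod_mem {R : Type*} [CommRing R] {Q : Ideal R} (hQ : Q.IsPrime)
    {ι : Type*} (s : Finset ι) (g : ι → R) (h : (∏ i ∈ s, g i) ∈ Q) :
    ∃ i ∈ s, g i ∈ Q := by
  classical
  induction s using Finset.induction_on with
  | empty =>
      simp only [Finset.prod_empty] at h
      exact absurd ((Ideal.eq_top_iff_one Q).mpr h) hQ.ne_top
  | insert a s ha ih =>
      rw [Finset.prod_insert ha] at h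
      rcases hQ.mem_or_mem h with h' | h'
      · exact ⟨a, Finset.mem_insert_self _ _, h'⟩
      · obtain ⟨i, hi, hgi⟩ := ih h'
        exact ⟨i, Finset.mem_insert_of_mem hi, hgi⟩

theorem ara_le_mu_sub_nu_add_one {K : Type*} [Field K] (n : ℕ)
    (M : Finset (Finset (Fin n))) (I : Ideal (MvPolynomial (Fin n) K))
    -- `M` is a generating set of squarefree monomials for `I` ...
    (hI : I = Ideal.span ((fun S => ∏ i ∈ S, X i) '' (M : Set (Finset (Fin n)))))
    -- ... and it is the minimal one
    (hmin : ∀ M' : Finset (Finset (Fin n)), M' ⊂ M →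
      Ideal.span ((fun S => ∏ i ∈ S, X i) '' (M' : Set (Finset (Fin n)))) ≠ I)
    -- the minimal primes of `I` are exactly the ideals generated by the sets of
    -- variables listed in `primes`
    (primes : Finset (Finset (Fin n))) (hne : primes.Nonempty)
    (hprimes : ∀ p : Ideal (MvPolynomial (Fin n) K), p ∈ I.minimalPrimes ↔
      ∃ S ∈ primes, p = Ideal.span ((fun i => (X i : MvPolynomial (Fin n) K)) '' S)) :
    ara I ≤ M.card -
      primes.inf' hne (fun S => S.sup fun i => (M.filter fun m => i ∈ m).card) + 1 := by
  classical
  unfold ara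
  set ν : ℕ := primes.inf' hne (fun S => S.sup fun i => (M.filter fun m => i ∈ m).card)
    with hνdef
  rcases Finset.eq_empty_or_nonempty M with hM | hM
  · -- `M = ∅`, so `I = ⊥` and `ara I = 0`.
    have h0 : (0 : ℕ) ∈ {s : ℕ | ∃ f : Fin s → MvPolynomial (Fin n) K,
        Ideal.radical (Ideal.span (Set.range f)) = Ideal.radical I} := by
      refine ⟨Fin.elim0, ?_⟩
      have hr : (Set.range (Fin.elim0 : Fin 0 → MvPolynomial (Fin n) K)) = ∅ := by
        simp
      rw [hr, hI, hM]
      simp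
    exact le_trans (Nat.sInf_le h0) (by omega)
  -- Notation
  set mono : Finset (Fin n) → MvPolynomial (Fin n) K := fun S => ∏ i ∈ S, X i with hmono
  -- existence of a generator all of whose variables have degree at least ν
  have hm₀ex : ∃ m₀ ∈ M, ∀ z ∈ m₀, ν ≤ (M.filter fun m => z ∈ m).card := by
    by_contra hcon
    push_neg at hcon
    obtain ⟨m₁, hm₁⟩ := hM
    obtain ⟨z₁, _, hz₁⟩ := hcon m₁ hm₁
    have hν1 : 1 ≤ ν := by omega
    set ψ : MvPolynomial (Fin n) K →ₐ[K] MvPolynomial (Fin n) K :=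
      aeval (fun i => if (M.filter fun m => i ∈ m).card < ν then 0 else X i) with hψ
    have hker : (RingHom.ker ψ.toRingHom).IsPrime := RingHom.ker_isPrime _
    have hIker : I ≤ RingHom.ker ψ.toRingHom := by
      rw [hI]
      refine Ideal.span_le.mpr ?_
      rintro g ⟨m, hm, rfl⟩
      obtain ⟨z, hzm, hz⟩ := hcon m (Finset.mem_coe.mp hm)
      have : ψ (∏ i ∈ m, X i) = 0 := by
        rw [map_prod]
        exact Finset.prod_eq_zero hzm (by simp [hψ, if_pos hz])
      exact RingHom.mem_ker.mpr this
    haveI := hker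
    obtain ⟨p, hpmin, hple⟩ := Ideal.exists_minimalPrimes_le hIker
    obtain ⟨S, hSmem, rfl⟩ := (hprimes p).mp hpmin
    have hSlt : ∀ z ∈ S, (fun i => (M.filter fun m => i ∈ m).card) z < ν := by
      intro z hzS
      by_contra hge
      push_neg at hge
      have hXz : (X z : MvPolynomial (Fin n) K) ∈
          Ideal.span ((fun i => (X i : MvPolynomial (Fin n) K)) '' S) :=
        Ideal.subset_span ⟨z, hzS, rfl⟩
      have h0 : ψ (X z) = 0 := RingHom.mem_ker.mp (hple hXz)
      rw [hψ] at h0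
      simp only [aeval_X] at h0
      rw [if_neg (not_lt.mpr hge)] at h0
      exact MvPolynomial.X_ne_zero z h0
    have h1 : ν ≤ S.sup fun i => (M.filter fun m => i ∈ m).card :=
      Finset.inf'_le _ hSmem
    have h2 : (S.sup fun i => (M.filter fun m => i ∈ m).card) < ν := by
      refine Finset.sup_lt_iff ?_ |>.mpr hSlt
      rw [bot_eq_zero']; omega
    omega
  obtain ⟨m₀, hm₀M, hm₀⟩ := hm₀ex
  set N : Finset (Finset (Fin n)) := M.erase m₀ with hN
  have hNM : N ⊆ M := Finset.erase_subset _ _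
  set E : ℕ → MvPolynomial (Fin n) K :=
    fun k => ∑ T ∈ N.powersetCard k, ∏ w ∈ T, mono w with hE
  set q : ℕ := M.card - ν with hq
  set f : Fin (q + 1) → MvPolynomial (Fin n) K :=
    fun j => if (j : ℕ) = 0 then mono m₀ else E (j : ℕ) with hf
  have hIspan : ∀ m ∈ M, mono m ∈ I := by
    intro m hm
    rw [hI]
    exact Ideal.subset_span ⟨m, Finset.mem_coe.mpr hm, rfl⟩
  -- each f j lies in I
  have hfI : ∀ j : Fin (q + 1), f j ∈ I := by
    intro j
    by_cases hj : (j : ℕ) = 0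
    · rw [hf]; simp only [hj, if_pos]
      simpa using hIspan m₀ hm₀M
    · rw [hf]; simp only [if_neg hj]
      refine Ideal.sum_mem _ (fun T hT => ?_)
      obtain ⟨hTN, hTc⟩ := Finset.mem_powersetCard.mp hT
      have hTne : T.Nonempty := by
        rw [← Finset.card_pos, hTc]
        omega
      obtain ⟨w, hwT⟩ := hTne
      rw [← Finset.mul_prod_erase T _ hwT]
      exact Ideal.mul_mem_right _ _ (hIspan w (hNM (hTN hwT)))
  -- the main radical inclusion
  have hmain : ∀ m ∈ M, ∀ J : Ideal (MvPolynomial (Fin n) K),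
      Ideal.span (Set.range f) ≤ J → J.IsPrime → mono m ∈ J := by
    intro m hmM J hJle hJp
    have hfJ : ∀ j : Fin (q + 1), f j ∈ J := fun j => hJle (Ideal.subset_span ⟨j, rfl⟩)
    have hm0J : mono m₀ ∈ J := by
      have h := hfJ ⟨0, by omega⟩
      rw [hf] at h
      simpa using h
    obtain ⟨z, hzm₀, hzJ⟩ := prime_prod_mem hJp m₀ X hm0J
    have hknown : ∀ m' ∈ M, z ∈ m' → mono m' ∈ J := by
      intro m' _ hzm'
      rw [hmono]
      simp only []
      rw [← Finset.mul_prod_erase m' _ hzm']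
      exact Ideal.mul_mem_right _ _ hzJ
    set U : Finset (Finset (Fin n)) := N.filter (fun m' => z ∉ m') with hU
    have hUN : U ⊆ N := Finset.filter_subset _ _
    -- cardinality bound
    have hUq : U.card ≤ q := by
      have hdegz : ν ≤ (M.filter fun m' => z ∈ m').card := hm₀ z hzm₀
      have hMN : N.card + 1 = M.card := Finset.card_erase_add_one hm₀M
      have hNsplit : (N.filter fun m' => z ∈ m').card + (N.filter fun m' => ¬ z ∈ m').card
          = N.card := Finset.card_filter_add_card_filter_not _
      have hMins : M.filter (fun m' => z ∈ m') = insert m₀ (N.filter fun m' => z ∈ m') := by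
        conv_lhs => rw [← Finset.insert_erase hm₀M]
        rw [Finset.filter_insert, if_pos hzm₀, hN]
      have hm₀notN : m₀ ∉ N.filter (fun m' => z ∈ m') := by
        intro hcontra
        exact Finset.notMem_erase m₀ M (Finset.mem_filter.mp hcontra).1
      have hdegcard : (M.filter fun m' => z ∈ m').card
          = (N.filter fun m' => z ∈ m').card + 1 := by
        rw [hMins, Finset.card_insert_of_notMem hm₀notN]
      have hUcard : U.card = (N.filter fun m' => ¬ z ∈ m').card := rfl
      omega
    -- elementary symmetric sums of the "unknown" monomials lie in J
    have hεJ : ∀ k, 1 ≤ k → k ≤ U.card →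
        (∑ T ∈ U.powersetCard k, ∏ w ∈ T, mono w) ∈ J := by
      intro k hk1 hk2
      have hkq : k ≤ q := le_trans hk2 hUq
      have hEk : E k ∈ J := by
        have h := hfJ ⟨k, by omega⟩
        rw [hf] at h
        simpa [Nat.one_le_iff_ne_zero.mp hk1] using h
      have hsplit := Finset.sum_filter_add_sum_filter_not (N.powersetCard k)
        (fun T => T ⊆ U) (fun T => ∏ w ∈ T, mono w)
      have hfil : (N.powersetCard k).filter (fun T => T ⊆ U) = U.powersetCard k := by
        ext T
        simp only [Finset.mem_filter, Finset.mem_powersetCard]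
        constructor
        · rintro ⟨⟨-, hc⟩, hTU⟩; exact ⟨hTU, hc⟩
        · rintro ⟨hTU, hc⟩; exact ⟨⟨hTU.trans hUN, hc⟩, hTU⟩
      have hrest : (∑ T ∈ (N.powersetCard k).filter (fun T => ¬ T ⊆ U),
          ∏ w ∈ T, mono w) ∈ J := by
        refine Ideal.sum_mem _ (fun T hT => ?_)
        obtain ⟨hTN, hTU⟩ := Finset.mem_filter.mp hT
        obtain ⟨w, hwT, hwU⟩ := Finset.not_subset.mp hTU
        have hwN : w ∈ N := (Finset.mem_powersetCard.mp hTN).1 hwT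
        have hzw : z ∈ w := by
          by_contra hzw
          exact hwU (Finset.mem_filter.mpr ⟨hwN, hzw⟩)
        rw [← Finset.mul_prod_erase T _ hwT]
        exact Ideal.mul_mem_right _ _ (hknown w (hNM hwN) hzw)
      have heq : (∑ T ∈ U.powersetCard k, ∏ w ∈ T, mono w)
          = E k - (∑ T ∈ (N.powersetCard k).filter (fun T => ¬ T ⊆ U),
              ∏ w ∈ T, mono w) := by
        rw [hE]
        simp only []
        rw [← hsplit, hfil]
        ring
      rw [heq]
      exact Ideal.sub_mem _ hEk hrest
    -- every "unknown" monomial lies in J, by a Vieta/integral-dependence trick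
    have hprodneg : ∀ (t : Finset (Finset (Fin n))),
        (∏ w ∈ t, (-(mono w))) = (-1 : MvPolynomial (Fin n) K) ^ t.card * ∏ w ∈ t, mono w := by
      intro t
      rw [← Finset.prod_const, ← Finset.prod_mul_distrib]
      exact Finset.prod_congr rfl (fun w _ => by ring)
    have hUJ : ∀ u ∈ U, mono u ∈ J := by
      intro u hu
      set x : MvPolynomial (Fin n) K := mono u with hx
      have h := Finset.prod_add (fun w => -(mono w)) (fun _ => x) U
      have hL : (∏ w ∈ U, (-(mono w) + x)) = 0 :=
        Finset.prod_eq_zero hu (by rw [hx]; ring)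
      rw [hL] at h
      have h2 : (0 : MvPolynomial (Fin n) K)
          = ∑ t ∈ U.powerset, (∏ w ∈ t, (-(mono w))) * x ^ (U.card - t.card) :=
        h.trans (Finset.sum_congr rfl (fun t ht => by
          rw [Finset.prod_const, Finset.card_sdiff_of_subset (Finset.mem_powerset.mp ht)]))
      rw [Finset.sum_powerset] at h2
      rw [Finset.sum_range_succ'] at h2
      have hG0 : (∑ t ∈ U.powersetCard 0, (∏ w ∈ t, (-(mono w))) * x ^ (U.card - t.card))
          = x ^ U.card := by
        rw [Finset.powersetCard_zero]
        simp
      rw [hG0] at h2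
      have hxpow : x ^ U.card ∈ J := by
        have hxeq : x ^ U.card = -(∑ j ∈ Finset.range U.card,
            ∑ t ∈ U.powersetCard (j + 1), (∏ w ∈ t, (-(mono w))) * x ^ (U.card - t.card)) :=
          eq_neg_of_add_eq_zero_right h2.symm
        rw [hxeq]
        refine neg_mem (Ideal.sum_mem _ (fun j hj => ?_))
        have hj' : j + 1 ≤ U.card := Finset.mem_range.mp hj
        have hrw : (∑ t ∈ U.powersetCard (j + 1),
              (∏ w ∈ t, (-(mono w))) * x ^ (U.card - t.card))
            = ((-1 : MvPolynomial (Fin n) K) ^ (j + 1) * x ^ (U.card - (j + 1)))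
              * ∑ t ∈ U.powersetCard (j + 1), ∏ w ∈ t, mono w := by
          rw [Finset.mul_sum]
          refine Finset.sum_congr rfl (fun t ht => ?_)
          have htc : t.card = j + 1 := (Finset.mem_powersetCard.mp ht).2
          rw [hprodneg t, htc]
          ring
        rw [hrw]
        exact Ideal.mul_mem_left _ _ (hεJ (j + 1) (by omega) hj')
      have hUcardpos : 0 < U.card := Finset.card_pos.mpr ⟨u, hu⟩
      exact hJp.mem_of_pow_mem _ hxpow
    -- conclude for the generator m
    by_cases hmm : m = m₀
    · rw [hmm]; exact hm0J
    · by_cases hzm : z ∈ m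
      · exact hknown m hmM hzm
      · exact hUJ m (Finset.mem_filter.mpr ⟨Finset.mem_erase.mpr ⟨hmm, hmM⟩, hzm⟩)
  -- assemble the radical equality
  have hmem : (M.card - ν + 1) ∈ {s : ℕ | ∃ f : Fin s → MvPolynomial (Fin n) K,
      Ideal.radical (Ideal.span (Set.range f)) = Ideal.radical I} := by
    refine ⟨f, ?_⟩
    have hA : Ideal.span (Set.range f) ≤ Ideal.radical I := by
      refine Ideal.span_le.mpr ?_
      rintro g ⟨j, rfl⟩
      exact Ideal.le_radical (hfI j)
    have hB : I ≤ Ideal.radical (Ideal.span (Set.range f)) := by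
      rw [hI]
      refine Ideal.span_le.mpr ?_
      rintro g ⟨m, hm, rfl⟩
      rw [Ideal.radical_eq_sInf]
      refine Ideal.mem_sInf.mpr ?_
      rintro J ⟨hJle, hJp⟩
      exact hmain m (Finset.mem_coe.mp hm) J hJle hJp
    refine le_antisymm ?_ ?_
    · have := Ideal.radical_mono hA
      rwa [Ideal.radical_idem] at this
    · have := Ideal.radical_mono hB
      rwa [Ideal.radical_idem] at this
  exact Nat.sInf_le hmem
end

section
/- Let I be a squarefree monomial ideal in K[x_1,...,x_n] with minimal monomial generating set M of cardinality μ(I). Define ν(I) = min over minimal primes I_j of (max over variables x_i ∈ I_j of |{f ∈ M : x_i divides f}|), and τ(I) = max over minimal primes I_j of height(I_j). Then μ(I) ≤ ν(I)·τ(I). -/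
/-! A minimal prime `P = (x_i : i ∈ S)` of `I` contains every generator `∏_{i ∈ m} x_i`, so by
primality some `x_i` with `i ∈ m` lies in `P`, i.e. `m` meets `S`. Hence the sets
`{m ∈ M : i ∈ m}`, `i ∈ S`, cover `M`; choosing `S` to realise `ν(I)` gives
`μ(I) ≤ |S| · ν(I) ≤ τ(I) · ν(I)`. -/

open MvPolynomial

theorem Finset.card_le_card_mul_sup_card_filter_mem {α : Type*} [DecidableEq α]
    (M : Finset (Finset α)) (S : Finset α) (hcover : ∀ m ∈ M, ∃ i ∈ S, i ∈ m) :
    M.card ≤ S.card * S.sup fun i => (M.filter fun m => i ∈ m).card := by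
  have hsub : M ⊆ S.biUnion fun i => M.filter fun m => i ∈ m := fun m hm => by
    obtain ⟨i, hiS, him⟩ := hcover m hm
    exact Finset.mem_biUnion.mpr ⟨i, hiS, Finset.mem_filter.mpr ⟨hm, him⟩⟩
  exact (Finset.card_le_card hsub).trans <| Finset.card_biUnion_le_card_mul _ _ _ fun i hi =>
    Finset.le_sup (f := fun i => (M.filter fun m => i ∈ m).card) hi

theorem MvPolynomial.X_mem_ideal_span_X_image_iff {σ R : Type*} [CommSemiring R] [Nontrivial R]
    {i : σ} {s : Set σ} : (X i : MvPolynomial σ R) ∈ Ideal.span (X '' s) ↔ i ∈ s := by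
  refine ⟨fun h => ?_, fun h => Ideal.subset_span ⟨i, h, rfl⟩⟩
  obtain ⟨j, hj, hij⟩ := mem_ideal_span_X_image.mp h (Finsupp.single i 1) (by simp [support_X])
  obtain ⟨rfl, -⟩ := Finsupp.single_apply_ne_zero.mp hij
  exact hj

theorem MvPolynomial.exists_mem_of_prod_X_mem_of_isPrime {σ R : Type*} [CommSemiring R]
    [Nontrivial R] {m : Finset σ} {s : Set σ}
    (hprime : (Ideal.span (X '' s) : Ideal (MvPolynomial σ R)).IsPrime)
    (hmem : ∏ i ∈ m, (X i : MvPolynomial σ R) ∈ Ideal.span (X '' s)) :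
    ∃ i ∈ s, i ∈ m := by
  obtain ⟨i, him, hi⟩ := hprime.prod_mem_iff.mp hmem
  exact ⟨i, X_mem_ideal_span_X_image_iff.mp hi, him⟩

theorem mu_le_nu_mul_tau_general {K : Type*} [Field K] (n : ℕ)
    (M : Finset (Finset (Fin n))) (I : Ideal (MvPolynomial (Fin n) K))
    -- `M` is the minimal generating set of squarefree monomials for `I`
    (hI : I = Ideal.span ((fun S => ∏ i ∈ S, X i) '' (M : Set (Finset (Fin n)))))
    -- the minimal primes of `I` are exactly the ideals generated by the sets of
    -- variables listed in `primes`; the height of such a prime is the number of variables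
    (primes : Finset (Finset (Fin n))) (hne : primes.Nonempty)
    (hprimes : ∀ p : Ideal (MvPolynomial (Fin n) K), p ∈ I.minimalPrimes ↔
      ∃ S ∈ primes, p = Ideal.span ((fun i => (X i : MvPolynomial (Fin n) K)) '' S)) :
    M.card ≤
      primes.inf' hne (fun S => S.sup fun i => (M.filter fun m => i ∈ m).card) *
        primes.sup' hne (fun S => S.card) := by
  obtain ⟨S, hS, hν⟩ := Finset.exists_mem_eq_inf' hne
    (fun S => S.sup fun i => (M.filter fun m => i ∈ m).card)
  obtain ⟨⟨hprime, hIle⟩, -⟩ := (hprimes _).mpr ⟨S, hS, rfl⟩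
  have hcover : ∀ m ∈ M, ∃ i ∈ S, i ∈ m := fun m hm =>
    exists_mem_of_prod_X_mem_of_isPrime hprime (hIle (hI ▸ Ideal.subset_span ⟨m, hm, rfl⟩))
  calc M.card ≤ S.card * S.sup fun i => (M.filter fun m => i ∈ m).card :=
        M.card_le_card_mul_sup_card_filter_mem S hcover
    _ ≤ _ := by
        rw [mul_comm, hν]
        exact Nat.mul_le_mul_left _ (Finset.le_sup' _ hS)

theorem mu_le_nu_mul_tau {K : Type*} [Field K] (n : ℕ)
    (M : Finset (Finset (Fin n))) (I : Ideal (MvPolynomial (Fin n) K))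
    -- `M` is the minimal generating set of squarefree monomials for `I`
    (hI : I = Ideal.span ((fun S => ∏ i ∈ S, X i) '' (M : Set (Finset (Fin n)))))
    (hmin : ∀ M' : Finset (Finset (Fin n)), M' ⊂ M →
      Ideal.span ((fun S => ∏ i ∈ S, X i) '' (M' : Set (Finset (Fin n)))) ≠ I)
    -- the minimal primes of `I` are exactly the ideals generated by the sets of
    -- variables listed in `primes`; the height of such a prime is the number of variables
    (primes : Finset (Finset (Fin n))) (hne : primes.Nonempty)
    (hprimes : ∀ p : Ideal (MvPolynomial (Fin n) K), p ∈ I.minimalPrimes ↔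
      ∃ S ∈ primes, p = Ideal.span ((fun i => (X i : MvPolynomial (Fin n) K)) '' S)) :
    M.card ≤
      primes.inf' hne (fun S => S.sup fun i => (M.filter fun m => i ∈ m).card) *
        primes.sup' hne (fun S => S.card) :=
  mu_le_nu_mul_tau_general n M I hI primes hne hprimes
end

section
/- In R = Q[x_1,...,x_9], the ideal I = (x_1x_2, x_1x_3, x_2x_4, x_4x_5, x_4x_6, x_2x_7, x_6x_8, x_6x_9) satisfies Rad I = Rad(x_1x_2, x_1x_3 + x_2x_4, x_2x_7 + x_4x_6, x_4x_5 + x_6x_8, x_6x_9); in particular ara I ≤ 5. -/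
/-!
Starting from `x₁x₂ ∈ √J`, each of the sums `x₁x₃ + x₂x₄`, `x₂x₇ + x₄x₆`, `x₄x₅ + x₆x₈`
generating `J` has summands whose product is a multiple of an earlier monomial already known
to lie in `√J`. Since `p + q, pq ∈ √J` force `p, q ∈ √J` (as `p² = p(p + q) - pq`), all
generators of `I` lie in `√J`; the inclusion `J ⊆ I` is immediate.
-/

open MvPolynomial

section

variable {R : Type*} [CommRing R]

theorem Ideal.mem_radical_of_add_mem_radical_of_mul_mem_radical {J : Ideal R} {p q : R}
    (hadd : p + q ∈ J.radical) (hmul : p * q ∈ J.radical) :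
    p ∈ J.radical ∧ q ∈ J.radical := by
  have hp : p ∈ J.radical := by
    refine Ideal.mem_radical_of_pow_mem (m := 2) ?_
    have hsq : p ^ 2 = p * (p + q) - p * q := by ring
    rw [hsq]
    exact J.radical.sub_mem (J.radical.mul_mem_left p hadd) hmul
  refine ⟨hp, ?_⟩
  simpa using J.radical.sub_mem hadd hp

theorem ara_le_of_radical_span_range_eq {n : ℕ} {J : Ideal R} (f : Fin n → R)
    (hf : (Ideal.span (Set.range f)).radical = J.radical) : ara J ≤ n :=
  Nat.sInf_le ⟨f, hf⟩

end

-- The variables `x_1, …, x_9` are `X 0, …, X 8`.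
theorem example1 (I : Ideal (MvPolynomial (Fin 9) ℚ))
    (hI : I = Ideal.span
      {X 0 * X 1, X 0 * X 2, X 1 * X 3, X 3 * X 4, X 3 * X 5, X 1 * X 6, X 5 * X 7,
        X 5 * X 8}) :
    Ideal.radical I = Ideal.radical (Ideal.span
      {X 0 * X 1, X 0 * X 2 + X 1 * X 3, X 1 * X 6 + X 3 * X 5, X 3 * X 4 + X 5 * X 7,
        X 5 * X 8}) ∧ ara I ≤ 5 := by
  set J : Ideal (MvPolynomial (Fin 9) ℚ) := Ideal.span
      {X 0 * X 1, X 0 * X 2 + X 1 * X 3, X 1 * X 6 + X 3 * X 5, X 3 * X 4 + X 5 * X 7,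
        X 5 * X 8}
  have hJ : ∀ p ∈ ({X 0 * X 1, X 0 * X 2 + X 1 * X 3, X 1 * X 6 + X 3 * X 5,
      X 3 * X 4 + X 5 * X 7, X 5 * X 8} : Set _), p ∈ J.radical :=
    fun p hp => J.le_radical (Ideal.subset_span hp)
  have h01 := hJ (X 0 * X 1) (by simp)
  obtain ⟨h02, h13⟩ := Ideal.mem_radical_of_add_mem_radical_of_mul_mem_radical
    (hJ (X 0 * X 2 + X 1 * X 3) (by simp)) (Ideal.mem_of_dvd _ ⟨X 2 * X 3, by ring⟩ h01)
  obtain ⟨h16, h35⟩ := Ideal.mem_radical_of_add_mem_radical_of_mul_mem_radical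
    (hJ (X 1 * X 6 + X 3 * X 5) (by simp)) (Ideal.mem_of_dvd _ ⟨X 5 * X 6, by ring⟩ h13)
  obtain ⟨h34, h57⟩ := Ideal.mem_radical_of_add_mem_radical_of_mul_mem_radical
    (hJ (X 3 * X 4 + X 5 * X 7) (by simp)) (Ideal.mem_of_dvd _ ⟨X 4 * X 7, by ring⟩ h35)
  have hIJ : I.radical = J.radical := by
    subst hI
    refine le_antisymm ?_ (Ideal.radical_mono ?_)
    · rw [Ideal.radical_le_radical_iff, Ideal.span_le]
      simp only [Set.insert_subset_iff, Set.singleton_subset_iff, SetLike.mem_coe]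
      exact ⟨h01, h02, h13, h34, h35, h16, h57, hJ _ (by simp)⟩
    · rw [Ideal.span_le]
      simp only [Set.insert_subset_iff, Set.singleton_subset_iff, SetLike.mem_coe]
      refine ⟨?_, add_mem ?_ ?_, add_mem ?_ ?_, add_mem ?_ ?_, ?_⟩ <;>
        exact Ideal.subset_span (by simp)
  refine ⟨hIJ, ara_le_of_radical_span_range_eq
    ![X 0 * X 1, X 0 * X 2 + X 1 * X 3, X 1 * X 6 + X 3 * X 5, X 3 * X 4 + X 5 * X 7,
      X 5 * X 8] ?_⟩
  rw [hIJ]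
  congr 2
  simp only [Matrix.range_cons, Matrix.range_empty, Set.union_empty, Set.singleton_union]
end
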